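/- arXiv:math/0305348 — 2 statements merged into one kernel-verified Lean document; each statement's English description precedes it below -/
import Mathlib

section
/- Let (a_n) be defined by a_0 = 4 and, for n ≥ 1, a_n = min{ |d − p_n/d| : d divides p_n and |d − p_n/d| > 1 }, where p_n = a_0·a_1···a_{n−1}. Let (b_n) be defined by b_1 = 1 and, for n ≥ 2, b_n = ⌈(1/2)·(b_1 + b_2 + ... + b_{n−1})⌉. Then for every n > 2, a_n = 2^{b_n}. -/
/-!
From `p 3 = 48 = 2 ^ 4 * 3` on, `p n = 2 ^ e * 3` with `e = b 1 + ⋯ + b (n - 1) + 2`.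
A divisor of `2 ^ e * 3` is `2 ^ i` or `3 * 2 ^ i`, so every gap `|d - p n / d|` has the form
`|3 * 2 ^ i - 2 ^ j|` with `i + j = e`; such a gap is at least `2 ^ ((e - 1) / 2)`, with equality
for `d = 3 * 2 ^ ((e - 1) / 2)`. Since `(e - 1) / 2 = ⌈(e - 2) / 2⌉ = b n`, this gives
`a n = 2 ^ b n`, and multiplying `p n` by it preserves the shape of `p`.
-/

open Finset

lemma ceil_natCast_div_two (s : ℕ) : ⌈(s : ℚ) / 2⌉ = ((s + 1) / 2 : ℕ) := by
  have := Rat.ceil_natCast_div_natCast s 2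
  push_cast at this ⊢
  omega

lemma two_pow_le_abs_three_sub_two_pow (k : ℕ) : (2 : ℤ) ^ ((k - 1) / 2) ≤ |3 - 2 ^ k| := by
  rcases k with _ | _ | _ | k
  · norm_num
  · norm_num
  · norm_num
  · have h₁ : (2 : ℤ) ^ ((k + 2) / 2) ≤ 2 ^ (k + 2) :=
      pow_le_pow_right₀ (by norm_num) (by omega)
    have h₂ : (1 : ℤ) ≤ 2 ^ k := one_le_pow₀ (by norm_num)
    simp only [show k + 1 + 1 + 1 - 1 = k + 2 by omega, pow_succ] at h₁ ⊢
    rw [abs_of_nonpos (by linarith)]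
    linarith

lemma two_pow_le_abs_three_mul_two_pow_sub_two_pow (i j : ℕ) :
    (2 : ℤ) ^ ((i + j - 1) / 2) ≤ |3 * 2 ^ i - 2 ^ j| := by
  rcases le_or_gt j i with hji | hij
  · have h₁ : (2 : ℤ) ^ j ≤ 2 ^ i := pow_le_pow_right₀ (by norm_num) hji
    have h₂ : (2 : ℤ) ^ ((i + j - 1) / 2) ≤ 2 ^ i :=
      pow_le_pow_right₀ (by norm_num) (by omega)
    have h₃ : (0 : ℤ) < 2 ^ i := by positivity
    rw [abs_of_nonneg (by linarith)]
    linarith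
  · obtain ⟨k, rfl⟩ := Nat.exists_eq_add_of_lt hij
    calc (2 : ℤ) ^ ((i + (i + k + 1) - 1) / 2) = 2 ^ i * 2 ^ ((k + 1 - 1) / 2) := by
          rw [← pow_add]; congr 1; omega
      _ ≤ 2 ^ i * |3 - 2 ^ (k + 1)| := by gcongr; exact two_pow_le_abs_three_sub_two_pow _
      _ = |2 ^ i * (3 - 2 ^ (k + 1))| := by rw [abs_mul, abs_pow, abs_two]
      _ = |3 * 2 ^ i - 2 ^ (i + k + 1)| := by ring_nf

lemma exists_abs_sub_div_eq_of_dvd_two_pow_mul_three {e d : ℕ} (hd : d ∣ 2 ^ e * 3) :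
    ∃ i j, i + j = e ∧ |(d : ℤ) - ((2 ^ e * 3 / d : ℕ) : ℤ)| = |3 * 2 ^ i - 2 ^ j| := by
  obtain ⟨x, y, hx, hy, rfl⟩ := dvd_mul.mp hd
  obtain ⟨i, hi, rfl⟩ := (Nat.dvd_prime_pow Nat.prime_two).mp hx
  obtain ⟨j, rfl⟩ := Nat.exists_eq_add_of_le hi
  rcases (Nat.dvd_prime Nat.prime_three).mp hy with rfl | rfl
  · refine ⟨j, i, add_comm j i, ?_⟩
    rw [Nat.div_eq_of_eq_mul_left (by positivity)
      (by ring : 2 ^ (i + j) * 3 = 3 * 2 ^ j * (2 ^ i * 1)), abs_sub_comm]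
    push_cast; ring_nf
  · refine ⟨i, j, rfl, ?_⟩
    rw [Nat.div_eq_of_eq_mul_left (by positivity)
      (by ring : 2 ^ (i + j) * 3 = 2 ^ j * (2 ^ i * 3))]
    push_cast; ring_nf

noncomputable def minDivisorGap (N : ℕ) : ℕ :=
  sInf {v : ℕ | ∃ d : ℕ, d ∣ N ∧ 0 < d ∧ 1 < v ∧
    (v : ℤ) = |(d : ℤ) - ((N / d : ℕ) : ℤ)|}

lemma minDivisorGap_eq_of_le {N v d₀ : ℕ} (hN : N ≠ 0) (hd₀ : d₀ ∣ N) (hd₀_pos : 0 < d₀)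
    (hv : 1 < v) (hv₀ : (v : ℤ) = |(d₀ : ℤ) - ((N / d₀ : ℕ) : ℤ)|)
    (hle : ∀ d ∈ N.divisors, 1 < |(d : ℤ) - ((N / d : ℕ) : ℤ)| →
      (v : ℤ) ≤ |(d : ℤ) - ((N / d : ℕ) : ℤ)|) :
    minDivisorGap N = v := by
  refine IsLeast.csInf_eq ⟨⟨d₀, hd₀, hd₀_pos, hv, hv₀⟩, ?_⟩
  rintro w ⟨d, hd, hd_pos, hw, hw₀⟩
  have hw' : (1 : ℤ) < w := mod_cast hw
  zify
  rw [hw₀] at hw' ⊢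
  exact hle d (Nat.mem_divisors.mpr ⟨hd, hN⟩) hw'

lemma minDivisorGap_four : minDivisorGap 4 = 3 :=
  minDivisorGap_eq_of_le (d₀ := 1) (by norm_num) (by norm_num) one_pos (by norm_num) (by norm_num)
    (by decide)

lemma minDivisorGap_twelve : minDivisorGap 12 = 4 :=
  minDivisorGap_eq_of_le (d₀ := 2) (by norm_num) (by norm_num) two_pos (by norm_num) (by norm_num)
    (by decide)

lemma minDivisorGap_two_pow_mul_three {e : ℕ} (he : 3 ≤ e) :
    minDivisorGap (2 ^ e * 3) = 2 ^ ((e - 1) / 2) := by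
  obtain ⟨m, k, rfl, hk⟩ : ∃ m k, e = m + k ∧ (k = m + 1 ∨ k = m + 2) :=
    ⟨(e - 1) / 2, e - (e - 1) / 2, by omega, by omega⟩
  have hm : (m + k - 1) / 2 = m := by omega
  rw [hm]
  have hdiv : 2 ^ (m + k) * 3 = 2 ^ k * (3 * 2 ^ m) := by ring
  refine IsLeast.csInf_eq ⟨⟨3 * 2 ^ m, Dvd.intro_left _ hdiv.symm, by positivity,
    Nat.one_lt_two_pow (by omega), ?_⟩, ?_⟩
  · rw [Nat.div_eq_of_eq_mul_left (by positivity) hdiv]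
    push_cast
    rcases hk with rfl | rfl
    · rw [abs_of_nonneg (by rw [pow_succ]; linarith [pow_pos two_pos (M₀ := ℤ) m])]; ring
    · rw [abs_of_nonpos (by rw [pow_add]; linarith [pow_pos two_pos (M₀ := ℤ) m])]; ring
  · rintro v ⟨d, hd, -, -, hv⟩
    obtain ⟨i, j, hij, habs⟩ := exists_abs_sub_div_eq_of_dvd_two_pow_mul_three hd
    zify
    rw [hv, habs, ← hm, ← hij]
    exact two_pow_le_abs_three_mul_two_pow_sub_two_pow i j

lemma eq_two_pow_of_minDivisorGap {a b p : ℕ → ℕ} (hp : ∀ n, p (n + 1) = p n * a n)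
    (ha : ∀ n, 1 ≤ n → a n = minDivisorGap (p n))
    (hb : ∀ n, 2 ≤ n → b n = (∑ k ∈ Icc 1 (n - 1), b k + 1) / 2) (hb1 : 1 ≤ b 1)
    (hp3 : p 3 = 2 ^ (∑ k ∈ Icc 1 2, b k + 2) * 3) (m : ℕ) :
    a (m + 3) = 2 ^ b (m + 3) := by
  have ha_of_hp : ∀ m, p (m + 3) = 2 ^ (∑ k ∈ Icc 1 (m + 2), b k + 2) * 3 →
      a (m + 3) = 2 ^ b (m + 3) := by
    intro m hpm
    have hS : b 1 ≤ ∑ k ∈ Icc 1 (m + 2), b k :=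
      single_le_sum (fun _ _ => Nat.zero_le _) (by simp)
    rw [ha _ (by omega), hpm, minDivisorGap_two_pow_mul_three (by omega), hb _ (by omega),
      show m + 3 - 1 = m + 2 by omega]
    congr 1
  have hpm : ∀ m, p (m + 3) = 2 ^ (∑ k ∈ Icc 1 (m + 2), b k + 2) * 3 := by
    intro m
    induction m with
    | zero => exact hp3
    | succ m ih =>
      rw [show m + 1 + 3 = m + 3 + 1 from rfl, hp, ih, ha_of_hp m ih,
        show m + 1 + 2 = m + 2 + 1 from rfl, sum_Icc_succ_top (b := m + 2) (by omega)]
      ring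
  exact ha_of_hp m (hpm m)

/-- Theorem: with `a 0 = 4`, `p n = a 0 ⋯ a (n-1)`,
`a n = min{ |d − p n / d| : d ∣ p n, |d − p n / d| > 1 }` for `n ≥ 1`,
`b 1 = 1` and `b n = ⌈(b 1 + ⋯ + b (n-1)) / 2⌉` for `n ≥ 2`,
one has `a n = 2 ^ b n` for all `n > 2`. -/
theorem josephus_main
    (a b p : ℕ → ℕ)
    (hp : ∀ n, p n = ∏ k ∈ Finset.range n, a k)
    (ha0 : a 0 = 4)
    (ha : ∀ n, 1 ≤ n →
      a n = sInf {v : ℕ | ∃ d : ℕ, d ∣ p n ∧ 0 < d ∧ 1 < v ∧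
        (v : ℤ) = |(d : ℤ) - ((p n / d : ℕ) : ℤ)|})
    (hb1 : b 1 = 1)
    (hb : ∀ n, 2 ≤ n →
      (b n : ℤ) = ⌈(∑ k ∈ Finset.Icc 1 (n - 1), (b k : ℚ)) / 2⌉) :
    ∀ n, 2 < n → a n = 2 ^ b n := by
  have ha' : ∀ n, 1 ≤ n → a n = minDivisorGap (p n) := ha
  have hp_succ : ∀ n, p (n + 1) = p n * a n := fun n => by rw [hp, hp, prod_range_succ]
  have hb' : ∀ n, 2 ≤ n → b n = (∑ k ∈ Icc 1 (n - 1), b k + 1) / 2 := fun n hn => by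
    have h := hb n hn
    rwa [← Nat.cast_sum, ceil_natCast_div_two, Nat.cast_inj] at h
  have hp1 : p 1 = 4 := by rw [hp, prod_range_one, ha0]
  have ha1 : a 1 = 3 := by rw [ha' 1 le_rfl, hp1, minDivisorGap_four]
  have ha2 : a 2 = 4 := by rw [ha' 2 (by norm_num), hp_succ, hp1, ha1, minDivisorGap_twelve]
  have hb2 : b 2 = 1 := by simpa [hb1] using hb' 2 le_rfl
  have hp3 : p 3 = 2 ^ (∑ k ∈ Icc 1 2, b k + 2) * 3 := by
    rw [hp_succ, hp_succ, hp1, ha1, ha2, sum_Icc_succ_top (by norm_num), Icc_self, sum_singleton,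
      hb1, hb2]
    norm_num
  intro n hn
  obtain ⟨m, rfl⟩ := Nat.exists_eq_add_of_le' hn
  exact eq_two_pow_of_minDivisorGap hp_succ ha' hb' hb1.ge hp3 m
end

section
/- For every integer k ≥ 1, δ(3·2^k) = 2^{⌈k/2⌉ − 1}, where δ(m) denotes the minimum of |d − m/d| taken over all positive divisors d of m. -/
/-!
Every divisor of `3 * 2 ^ k` is `2 ^ i` or `3 * 2 ^ j`, and it pairs with the other kind, where
`i + j = k`; so `δ(3 * 2 ^ k)` is the least `|2 ^ i - 3 * 2 ^ j|` with `i + j = k`. If `i ≤ j + 1`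
this is at least `2 ^ j`, otherwise at least `2 ^ (i - 2)`, and both exponents are at least
`⌊(k - 1) / 2⌋`. The bound is attained for `j = ⌊(k - 1) / 2⌋`, where `i ∈ {j + 1, j + 2}`.
-/

/-- `delta m` is the smallest absolute value of a difference between
complementary divisors of `m`: the minimum of `|d - m / d|` over all
positive divisors `d` of `m`. -/
noncomputable def delta (m : ℕ) : ℕ :=
  sInf {v : ℕ | ∃ d : ℕ, d ∣ m ∧ 0 < d ∧ (v : ℤ) = |(d : ℤ) - ((m / d : ℕ) : ℤ)|}

lemma le_delta_of_forall_dvd {m b : ℕ}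
    (h : ∀ d, d ∣ m → 0 < d → (b : ℤ) ≤ |(d : ℤ) - ((m / d : ℕ) : ℤ)|) : b ≤ delta m :=
  le_csInf ⟨_, 1, one_dvd m, one_pos, Int.natCast_natAbs _⟩ fun _ ⟨d, hd, hd0, hv⟩ ↦
    by exact_mod_cast hv ▸ h d hd hd0

lemma exists_eq_of_dvd_three_mul_two_pow {d k : ℕ} (hd : d ∣ 3 * 2 ^ k) :
    ∃ i j, i + j = k ∧ ((d = 2 ^ i ∧ 3 * 2 ^ k / d = 3 * 2 ^ j) ∨
      (d = 3 * 2 ^ j ∧ 3 * 2 ^ k / d = 2 ^ i)) := by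
  obtain ⟨a, b, ha, hb, rfl⟩ := Nat.dvd_mul.mp hd
  obtain ⟨j, hj, rfl⟩ := (Nat.dvd_prime_pow Nat.prime_two).mp hb
  obtain ⟨i, rfl⟩ := Nat.exists_eq_add_of_le hj
  rw [pow_add]
  rcases Nat.prime_three.eq_one_or_self_of_dvd a ha with rfl | rfl
  · exact ⟨j, i, rfl, .inl ⟨one_mul _, Nat.div_eq_of_eq_mul_left (by positivity) (by ring)⟩⟩
  · exact ⟨i, j, add_comm i j, .inr ⟨rfl, Nat.div_eq_of_eq_mul_left (by positivity) (by ring)⟩⟩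

lemma two_pow_le_abs_two_pow_sub_three_mul_two_pow_of_le {i j : ℕ} (h : i ≤ j + 1) :
    (2 : ℤ) ^ j ≤ |2 ^ i - 3 * 2 ^ j| := by
  have : (2 : ℤ) ^ i ≤ 2 * 2 ^ j := by
    rw [← pow_succ']; exact pow_le_pow_right₀ one_le_two h
  rw [abs_sub_comm]
  exact (by linarith : (2 : ℤ) ^ j ≤ 3 * 2 ^ j - 2 ^ i).trans (le_abs_self _)

lemma two_pow_le_abs_two_pow_add_two_sub_three_mul_two_pow {n j : ℕ} (h : j ≤ n) :
    (2 : ℤ) ^ n ≤ |2 ^ (n + 2) - 3 * 2 ^ j| := by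
  have : (2 : ℤ) ^ j ≤ 2 ^ n := pow_le_pow_right₀ one_le_two h
  exact (by rw [pow_add]; linarith : (2 : ℤ) ^ n ≤ 2 ^ (n + 2) - 3 * 2 ^ j).trans (le_abs_self _)

lemma two_pow_le_abs_two_pow_sub_three_mul_two_pow (i j : ℕ) :
    (2 : ℤ) ^ ((i + j - 1) / 2) ≤ |2 ^ i - 3 * 2 ^ j| := by
  rcases le_or_gt i (j + 1) with h | h
  · exact (pow_le_pow_right₀ one_le_two (by omega)).trans
      (two_pow_le_abs_two_pow_sub_three_mul_two_pow_of_le h)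
  · obtain ⟨n, rfl⟩ := Nat.exists_eq_add_of_le' (show 2 ≤ i by omega)
    exact (pow_le_pow_right₀ one_le_two (by omega)).trans
      (two_pow_le_abs_two_pow_add_two_sub_three_mul_two_pow (by omega))

lemma abs_two_pow_sub_three_mul_two_pow {n i : ℕ} (h₁ : n + 1 ≤ i) (h₂ : i ≤ n + 2) :
    |(2 : ℤ) ^ i - 3 * 2 ^ n| = 2 ^ n := by
  have : (0 : ℤ) < 2 ^ n := by positivity
  obtain rfl | rfl : i = n + 1 ∨ i = n + 2 := by omega
  · rw [pow_succ, abs_sub_comm, abs_of_nonneg (by linarith)]; ring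
  · rw [pow_add, abs_of_nonneg (by linarith)]; ring

lemma delta_three_mul_two_pow_add_le {n i : ℕ} (h₁ : n + 1 ≤ i) (h₂ : i ≤ n + 2) :
    delta (3 * 2 ^ (i + n)) ≤ 2 ^ n := by
  have hq : 3 * 2 ^ (i + n) / 2 ^ i = 3 * 2 ^ n :=
    Nat.div_eq_of_eq_mul_left (by positivity) (by ring)
  refine Nat.sInf_le ⟨2 ^ i, ⟨3 * 2 ^ n, by ring⟩, by positivity, ?_⟩
  rw [hq]
  push_cast
  exact (abs_two_pow_sub_three_mul_two_pow h₁ h₂).symm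

/-- For every `k ≥ 1`, `δ(3 * 2 ^ k) = 2 ^ (⌈k / 2⌉ - 1)`. -/
theorem delta_three_mul_two_pow (k : ℕ) (hk : 1 ≤ k) :
    delta (3 * 2 ^ k) = 2 ^ ((k + 1) / 2 - 1) := by
  rw [show (k + 1) / 2 - 1 = (k - 1) / 2 by omega]
  refine le_antisymm ?_ (le_delta_of_forall_dvd fun d hd _ ↦ ?_)
  · have := delta_three_mul_two_pow_add_le (n := (k - 1) / 2) (i := k - (k - 1) / 2)
      (by omega) (by omega)
    rwa [Nat.sub_add_cancel (by omega)] at this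
  · obtain ⟨i, j, rfl, ⟨rfl, hq⟩ | ⟨rfl, hq⟩⟩ := exists_eq_of_dvd_three_mul_two_pow hd
    all_goals rw [hq]; push_cast
    · exact two_pow_le_abs_two_pow_sub_three_mul_two_pow i j
    · exact abs_sub_comm (2 ^ i : ℤ) _ ▸ two_pow_le_abs_two_pow_sub_three_mul_two_pow i j
end
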